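/- arXiv:1910.08880 — 2 statements merged into one kernel-verified Lean document; each statement's English description precedes it below -/
import Mathlib

section
/- Let X ∈ ℝ^{n×p}, τ > 0, y ∈ {−1,1}ⁿ with design rows xᵢ. Define the smoothed hinge gradient ∇gᵗ(β) = −(1/(2n))·∑ᵢ (1 + wᵢᵗ(β))·yᵢ·xᵢ, where wᵢᵗ(β) = min(1, |zᵢ|/(2τ))·sign(zᵢ) and zᵢ = 1 − yᵢ⟨xᵢ, β⟩. Then ∇gᵗ is Lipschitz continuous with constant μ_max((1/n)XᵀX)/(4τ), where μ_max denotes the largest eigenvalue. -/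
lemma clip_eq (τ : ℝ) (hτ : 0 < τ) (c : ℝ) :
    min 1 (|c| / (2 * τ)) * Real.sign c = max (-1) (min 1 (c / (2 * τ))) := by
  have h2τ : 0 < 2 * τ := by linarith
  rcases lt_trichotomy c 0 with hc | hc | hc
  · rw [Real.sign_of_neg hc, abs_of_neg hc]
    have h1 : c / (2 * τ) ≤ 1 := by
      have : c / (2 * τ) < 0 := div_neg_of_neg_of_pos hc h2τ
      linarith
    rw [min_eq_right h1]
    have h3 : -c / (2 * τ) = -(c / (2 * τ)) := by ring
    rw [h3]
    rcases le_total (1 : ℝ) (-(c / (2 * τ))) with h | h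
    · rw [min_eq_left h, max_eq_left (by linarith)]; ring
    · rw [min_eq_right h, max_eq_right (by linarith)]; ring
  · simp [hc]
  · rw [Real.sign_of_pos hc, abs_of_pos hc, mul_one]
    have h0 : 0 ≤ c / (2 * τ) := le_of_lt (div_pos hc h2τ)
    have : (-1 : ℝ) ≤ min 1 (c / (2 * τ)) := le_min (by linarith) (by linarith)
    rw [max_eq_right this]

lemma clip_lip (τ : ℝ) (hτ : 0 < τ) (a b : ℝ) :
    |min 1 (|a| / (2 * τ)) * Real.sign a - min 1 (|b| / (2 * τ)) * Real.sign b| ≤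
      |a - b| / (2 * τ) := by
  rw [clip_eq τ hτ a, clip_eq τ hτ b]
  have L : LipschitzWith 1 (fun s : ℝ => max (-1) (min 1 s)) :=
    (LipschitzWith.id.const_min 1).const_max (-1)
  have h := L.dist_le_mul (a / (2 * τ)) (b / (2 * τ))
  simp only [Real.dist_eq, NNReal.coe_one, one_mul] at h
  calc |max (-1) (min 1 (a / (2*τ))) - max (-1) (min 1 (b / (2*τ)))| ≤ |a/(2*τ) - b/(2*τ)| := h
    _ = |a - b| / (2*τ) := by
        rw [div_sub_div_same, abs_div, abs_of_pos (by linarith : (0:ℝ) < 2*τ)]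

lemma mu_nonneg (n p : ℕ) (x : Fin n → Fin p → ℝ) (μmax : ℝ)
    (hμ : IsGreatest {c : ℝ | ∃ v : Fin p → ℝ, (∑ j, v j ^ 2 = 1) ∧
        c = (1 / n : ℝ) * ∑ i, (∑ j, x i j * v j) ^ 2} μmax) : 0 ≤ μmax := by
  obtain ⟨v, -, hv⟩ := hμ.1
  rw [hv]
  positivity

lemma specA (n p : ℕ) (hn : 0 < n) (x : Fin n → Fin p → ℝ) (μmax : ℝ)
    (hμ : IsGreatest {c : ℝ | ∃ v : Fin p → ℝ, (∑ j, v j ^ 2 = 1) ∧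
        c = (1 / n : ℝ) * ∑ i, (∑ j, x i j * v j) ^ 2} μmax)
    (v : Fin p → ℝ) :
    ∑ i, (∑ j, x i j * v j) ^ 2 ≤ n * μmax * ∑ j, v j ^ 2 := by
  have hn' : (0:ℝ) < n := by exact_mod_cast hn
  set S := ∑ j, v j ^ 2 with hS
  have hS0 : 0 ≤ S := Finset.sum_nonneg fun j _ => sq_nonneg _
  rcases eq_or_lt_of_le hS0 with h0 | hpos
  · have hv : ∀ j, v j = 0 := by
      intro j
      have := (Finset.sum_eq_zero_iff_of_nonneg
        (fun j _ => sq_nonneg (v j))).mp h0.symm j (Finset.mem_univ j)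
      exact pow_eq_zero_iff (n := 2) (by norm_num) |>.mp this
    simp [hv, ← hS, ← h0]
  · set s := Real.sqrt S with hs
    have hspos : 0 < s := Real.sqrt_pos.mpr hpos
    have hs2 : s ^ 2 = S := Real.sq_sqrt hS0
    set u : Fin p → ℝ := fun j => v j / s with hu
    have hunit : ∑ j, u j ^ 2 = 1 := by
      simp only [hu, div_pow]
      rw [← Finset.sum_div, ← hS, hs2]
      field_simp
    have hub := hμ.2 ⟨u, hunit, rfl⟩
    have hXu : ∀ i, ∑ j, x i j * u j = (∑ j, x i j * v j) / s := by
      intro i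
      rw [Finset.sum_div]
      exact Finset.sum_congr rfl fun j _ => by rw [hu]; ring
    have hsum : ∑ i, (∑ j, x i j * u j) ^ 2 = (∑ i, (∑ j, x i j * v j) ^ 2) / s ^ 2 := by
      rw [Finset.sum_div]
      exact Finset.sum_congr rfl fun i _ => by rw [hXu i, div_pow]
    rw [hsum] at hub
    set T := ∑ i, (∑ j, x i j * v j) ^ 2 with hT
    have hs2pos : 0 < s ^ 2 := by positivity
    have hub' : T / ((n:ℝ) * s ^ 2) ≤ μmax := by
      rw [show T / ((n:ℝ) * s ^ 2) = 1 / (n:ℝ) * (T / s ^ 2) by ring]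
      exact hub
    rw [div_le_iff₀ (by positivity)] at hub'
    rw [← hs2]
    nlinarith [hub']

lemma specB (n p : ℕ) (hn : 0 < n) (x : Fin n → Fin p → ℝ) (μmax : ℝ)
    (hμ : IsGreatest {c : ℝ | ∃ v : Fin p → ℝ, (∑ j, v j ^ 2 = 1) ∧
        c = (1 / n : ℝ) * ∑ i, (∑ j, x i j * v j) ^ 2} μmax)
    (u : Fin n → ℝ) :
    ∑ j, (∑ i, x i j * u i) ^ 2 ≤ n * μmax * ∑ i, u i ^ 2 := by
  have hn' : (0:ℝ) < n := by exact_mod_cast hn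
  have hμ0 : 0 ≤ μmax := mu_nonneg n p x μmax hμ
  set a : Fin p → ℝ := fun j => ∑ i, x i j * u i with ha
  set A := ∑ j, a j ^ 2 with hA
  have hA0 : 0 ≤ A := Finset.sum_nonneg fun j _ => sq_nonneg _
  have hswap : A = ∑ i, u i * ∑ j, x i j * a j := by
    calc A = ∑ j, a j * ∑ i, x i j * u i := by
            exact Finset.sum_congr rfl fun j _ => by rw [sq]
      _ = ∑ j, ∑ i, a j * (x i j * u i) := by
            exact Finset.sum_congr rfl fun j _ => Finset.mul_sum _ _ _
      _ = ∑ i, ∑ j, a j * (x i j * u i) := Finset.sum_comm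
      _ = ∑ i, u i * ∑ j, x i j * a j := by
            refine Finset.sum_congr rfl fun i _ => ?_
            rw [Finset.mul_sum]
            exact Finset.sum_congr rfl fun j _ => by ring
  have hCS : A ^ 2 ≤ (∑ i, u i ^ 2) * ∑ i, (∑ j, x i j * a j) ^ 2 := by
    rw [hswap]
    exact Finset.sum_mul_sq_le_sq_mul_sq _ _ _
  have hXa : ∑ i, (∑ j, x i j * a j) ^ 2 ≤ n * μmax * A := specA n p hn x μmax hμ a
  have hU0 : 0 ≤ ∑ i, u i ^ 2 := Finset.sum_nonneg fun i _ => sq_nonneg _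
  have key : A ^ 2 ≤ (∑ i, u i ^ 2) * ((n:ℝ) * μmax * A) :=
    hCS.trans (mul_le_mul_of_nonneg_left hXa hU0)
  rcases eq_or_lt_of_le hA0 with h0 | hpos
  · rw [← h0]; positivity
  · nlinarith [key]

theorem stmt_15 (n p : ℕ) (hn : 0 < n) (hp : 0 < p) (τ : ℝ) (hτ : 0 < τ)
    (x : Fin n → Fin p → ℝ) (y : Fin n → ℝ) (hy : ∀ i, y i = 1 ∨ y i = -1)
    (μmax : ℝ)
    (hμ : IsGreatest {c : ℝ | ∃ v : Fin p → ℝ, (∑ j, v j ^ 2 = 1) ∧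
        c = (1 / n : ℝ) * ∑ i, (∑ j, x i j * v j) ^ 2} μmax)
    (z : (Fin p → ℝ) → Fin n → ℝ) (hz : ∀ β i, z β i = 1 - y i * ∑ j, x i j * β j)
    (w : (Fin p → ℝ) → Fin n → ℝ)
    (hw : ∀ β i, w β i = min 1 (|z β i| / (2 * τ)) * Real.sign (z β i))
    (grad : (Fin p → ℝ) → Fin p → ℝ)
    (hgrad : ∀ β j, grad β j = -(1 / (2 * n) : ℝ) * ∑ i, (1 + w β i) * y i * x i j) :
    ∀ β γ : Fin p → ℝ,
      Real.sqrt (∑ j, (grad β j - grad γ j) ^ 2) ≤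
        (μmax / (4 * τ)) * Real.sqrt (∑ j, (β j - γ j) ^ 2) := by
  intro β γ
  have hn' : (0:ℝ) < n := by exact_mod_cast hn
  have hμ0 : 0 ≤ μmax := mu_nonneg n p x μmax hμ
  have hyabs : ∀ i, |y i| = 1 := by
    intro i; rcases hy i with h | h <;> rw [h] <;> norm_num
  set u : Fin n → ℝ := fun i => (w β i - w γ i) * y i with hu
  set v : Fin p → ℝ := fun j => β j - γ j with hv
  -- gradient difference
  have hd : ∀ j, grad β j - grad γ j = -(1 / (2 * (n:ℝ))) * ∑ i, x i j * u i := by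
    intro j
    rw [hgrad, hgrad, ← mul_sub, ← Finset.sum_sub_distrib]
    congr 1
    exact Finset.sum_congr rfl fun i _ => by simp only [hu]; ring
  have hsum : ∑ j, (grad β j - grad γ j) ^ 2
      = (1 / (2 * (n:ℝ))) ^ 2 * ∑ j, (∑ i, x i j * u i) ^ 2 := by
    rw [Finset.mul_sum]
    exact Finset.sum_congr rfl fun j _ => by rw [hd j]; ring
  -- bound on u in terms of z differences, then X v
  have hzd : ∀ i, |z β i - z γ i| = |∑ j, x i j * v j| := by
    intro i
    have hsplit : ∑ j, x i j * v j = (∑ j, x i j * β j) - ∑ j, x i j * γ j := by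
      rw [← Finset.sum_sub_distrib]
      exact Finset.sum_congr rfl fun j _ => by simp only [hv]; ring
    rw [hz, hz, hsplit]
    rw [show (1 - y i * ∑ j, x i j * β j) - (1 - y i * ∑ j, x i j * γ j)
        = y i * -((∑ j, x i j * β j) - ∑ j, x i j * γ j) by ring]
    rw [abs_mul, hyabs i, one_mul, abs_neg]
  have hui : ∀ i, |u i| ≤ |∑ j, x i j * v j| / (2 * τ) := by
    intro i
    simp only [hu]
    rw [abs_mul, hyabs i, mul_one]
    calc |w β i - w γ i| ≤ |z β i - z γ i| / (2 * τ) := by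
          rw [hw, hw]; exact clip_lip τ hτ _ _
      _ = |∑ j, x i j * v j| / (2 * τ) := by rw [hzd i]
  have hu2 : ∑ i, u i ^ 2 ≤ (1 / (2 * τ)) ^ 2 * ∑ i, (∑ j, x i j * v j) ^ 2 := by
    rw [Finset.mul_sum]
    refine Finset.sum_le_sum fun i _ => ?_
    have h1 : u i ^ 2 ≤ (|∑ j, x i j * v j| / (2 * τ)) ^ 2 := by
      rw [← sq_abs (u i)]
      exact pow_le_pow_left₀ (abs_nonneg _) (hui i) 2
    calc u i ^ 2 ≤ (|∑ j, x i j * v j| / (2 * τ)) ^ 2 := h1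
      _ = (1 / (2 * τ)) ^ 2 * (∑ j, x i j * v j) ^ 2 := by rw [div_pow, sq_abs]; ring
  have hX1 : ∑ i, (∑ j, x i j * v j) ^ 2 ≤ n * μmax * ∑ j, v j ^ 2 :=
    specA n p hn x μmax hμ v
  have hX2 : ∑ j, (∑ i, x i j * u i) ^ 2 ≤ n * μmax * ∑ i, u i ^ 2 :=
    specB n p hn x μmax hμ u
  have hD0 : 0 ≤ ∑ j, v j ^ 2 := Finset.sum_nonneg fun j _ => sq_nonneg _
  have main : ∑ j, (grad β j - grad γ j) ^ 2
      ≤ (μmax / (4 * τ)) ^ 2 * ∑ j, v j ^ 2 := by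
    rw [hsum]
    have c1 : (0:ℝ) ≤ (1 / (2 * (n:ℝ))) ^ 2 := sq_nonneg _
    have c2 : (0:ℝ) ≤ (n:ℝ) * μmax := by positivity
    have step1 : ∑ i, u i ^ 2 ≤ (1 / (2 * τ)) ^ 2 * ((n:ℝ) * μmax * ∑ j, v j ^ 2) :=
      hu2.trans (mul_le_mul_of_nonneg_left hX1 (sq_nonneg _))
    calc (1 / (2 * (n:ℝ))) ^ 2 * ∑ j, (∑ i, x i j * u i) ^ 2
        ≤ (1 / (2 * (n:ℝ))) ^ 2 * ((n:ℝ) * μmax * ∑ i, u i ^ 2) :=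
          mul_le_mul_of_nonneg_left hX2 c1
      _ ≤ (1 / (2 * (n:ℝ))) ^ 2 * ((n:ℝ) * μmax *
            ((1 / (2 * τ)) ^ 2 * ((n:ℝ) * μmax * ∑ j, v j ^ 2))) :=
          mul_le_mul_of_nonneg_left (mul_le_mul_of_nonneg_left step1 c2) c1
      _ = (μmax / (4 * τ)) ^ 2 * ∑ j, v j ^ 2 := by
          field_simp
          ring
  have h1 := Real.sqrt_le_sqrt main
  rwa [Real.sqrt_mul (sq_nonneg _), Real.sqrt_sq (by positivity : 0 ≤ μmax / (4 * τ))] at h1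
end

section
/- Let g: ℝᵖ → ℝ be convex (β* is not assumed to be a global minimizer of g), and suppose there exist κ > 0 and r > 0 such that g(β* + z) − g(β*) ≥ (κ/4)‖z‖₂² for all z in a cone C with ‖z‖₂ ≤ r, where C is closed under positive scalar multiplication. Then for every h ∈ C with ‖h‖₂ ≥ r, g(β* + h) − g(β*) ≥ (κ/4)·r·‖h‖₂. -/
theorem stmt_18 (p : ℕ) (g : EuclideanSpace ℝ (Fin p) → ℝ)
    (hconv : ConvexOn ℝ Set.univ g) (βstar : EuclideanSpace ℝ (Fin p))
    (κ r : ℝ) (hκ : 0 < κ) (hr : 0 < r)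
    (C : Set (EuclideanSpace ℝ (Fin p)))
    (hcone : ∀ z ∈ C, ∀ t : ℝ, 0 < t → t • z ∈ C)
    (hlb : ∀ z ∈ C, ‖z‖ ≤ r → (κ / 4) * ‖z‖ ^ 2 ≤ g (βstar + z) - g βstar) :
    ∀ h ∈ C, r ≤ ‖h‖ → (κ / 4) * r * ‖h‖ ≤ g (βstar + h) - g βstar := by
  intro h hC hrh
  have hn : 0 < ‖h‖ := lt_of_lt_of_le hr hrh
  set t := r / ‖h‖ with ht
  have ht0 : 0 < t := div_pos hr hn
  have ht1 : t ≤ 1 := (div_le_one hn).mpr hrh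
  have hmem : t • h ∈ C := hcone h hC t ht0
  have hnorm : ‖t • h‖ = r := by
    rw [norm_smul, Real.norm_eq_abs, abs_of_pos ht0, ht, div_mul_cancel₀ _ (ne_of_gt hn)]
  have hlow := hlb (t • h) hmem (le_of_eq hnorm)
  rw [hnorm] at hlow
  -- convexity: g (βstar + t•h) ≤ (1-t) g βstar + t g (βstar + h)
  have hcv := hconv.2 (Set.mem_univ βstar) (Set.mem_univ (βstar + h))
    (by linarith : (0:ℝ) ≤ 1 - t) (le_of_lt ht0) (by ring)
  have heq : (1 - t) • βstar + t • (βstar + h) = βstar + t • h := by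
    module
  rw [heq] at hcv
  simp only [smul_eq_mul] at hcv
  have key : t * (g (βstar + h) - g βstar) ≥ κ / 4 * r ^ 2 := by nlinarith
  have : κ / 4 * r ^ 2 = t * ((κ / 4) * r * ‖h‖) := by
    field_simp [ht]
    rw [ht, div_mul_cancel₀ _ (ne_of_gt hn)]
  rw [this] at key
  have := (mul_le_mul_iff_right₀ ht0).mp key
  linarith
end
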